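/- arXiv:1806.08182 — 4 statements merged into one kernel-verified Lean document; each statement's English description precedes it below -/
import Mathlib

section
/- Let b ≥ 4 be a real number and define the sequence (x_t)_{t≥0} by x_0 = 1 and x_t = 4·x_{t−1}·b^{5^t·x_{t−1}} for t ≥ 1. Then for every t ≥ 0 one has x_t ≤ tower_{10b}(t+1) / 10^{t+1}. -/
/-- Tower function: `tower a 1 = a`, `tower a (j+1) = a ^ tower a j` (real exponentiation). -/
noncomputable def tower (a : ℝ) : ℕ → ℝ
  | 0 => 1
  | j + 1 => a ^ tower a j

/-!
By induction on `t`, with `T = tower (10 * b) (t + 1)`: the hypothesis `x t ≤ T / 10 ^ (t + 1)`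
bounds the exponent `5 ^ (t + 1) * x t` by `T / 2`, so `x (t + 1) ≤ 4 T b ^ (T / 2) / 10 ^ (t + 1)`.
Since `(10 b) ^ T = 10 ^ T · b ^ (T / 2) · b ^ (T / 2)`, it remains to see `40 T ≤ 10 ^ T b ^ (T / 2)`,
which follows from Bernoulli's inequality `1 + 9 T ≤ 10 ^ T` and `b ^ (T / 2) ≥ 16` once `T ≥ 4`.
-/

open Real

lemma one_le_tower {a : ℝ} (ha : 1 ≤ a) : ∀ j, 1 ≤ tower a j
  | 0 => le_rfl
  | j + 1 => one_le_rpow ha (zero_le_one.trans (one_le_tower ha j))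

lemma le_tower_succ {a : ℝ} (ha : 1 ≤ a) (j : ℕ) : a ≤ tower a (j + 1) := by
  simpa [tower] using rpow_le_rpow_of_exponent_le ha (one_le_tower ha j)

lemma forty_mul_mul_rpow_half_le {b T : ℝ} (hb : 4 ≤ b) (hT : 4 ≤ T) :
    40 * T * b ^ (T / 2) ≤ (10 * b) ^ T := by
  have hb0 : 0 ≤ b := by linarith
  have hbernoulli : 1 + 9 * T ≤ (10 : ℝ) ^ T := by
    have := one_add_mul_self_le_rpow_one_add (by norm_num : (-1 : ℝ) ≤ 9) (by linarith : 1 ≤ T)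
    norm_num at this
    linarith
  have hhalf : 16 ≤ b ^ (T / 2) :=
    calc (16 : ℝ) = 4 ^ (2 : ℝ) := by norm_num
      _ ≤ 4 ^ (T / 2) := rpow_le_rpow_of_exponent_le (by norm_num) (by linarith)
      _ ≤ b ^ (T / 2) := rpow_le_rpow (by norm_num) hb (by linarith)
  have hsplit : (10 * b) ^ T = 10 ^ T * b ^ (T / 2) * b ^ (T / 2) := by
    rw [mul_rpow (by norm_num) hb0, mul_assoc, ← rpow_add' hb0 (by linarith), add_halves]
  have hfactor : 40 * T ≤ 10 ^ T * b ^ (T / 2) := by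
    nlinarith [rpow_pos_of_pos (by norm_num : (0 : ℝ) < 10) T]
  rw [hsplit]
  exact mul_le_mul_of_nonneg_right hfactor (rpow_nonneg hb0 _)

lemma four_mul_mul_rpow_le_div_ten_pow {b T y : ℝ} (hb : 4 ≤ b) (hT : 4 ≤ T) (t : ℕ)
    (hy : y ≤ T / 10 ^ (t + 1)) :
    4 * y * b ^ ((5 : ℝ) ^ (t + 1) * y) ≤ (10 * b) ^ T / 10 ^ (t + 2) := by
  have hexp : (5 : ℝ) ^ (t + 1) * y ≤ T / 2 :=
    calc (5 : ℝ) ^ (t + 1) * y ≤ 5 ^ (t + 1) * (T / 10 ^ (t + 1)) := by gcongr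
      _ = T / 2 ^ (t + 1) := by rw [show (10 : ℝ) = 5 * 2 by norm_num, mul_pow]; field_simp
      _ ≤ T / 2 ^ 1 := by gcongr <;> norm_num
      _ = T / 2 := by norm_num
  calc 4 * y * b ^ ((5 : ℝ) ^ (t + 1) * y) ≤ 4 * (T / 10 ^ (t + 1)) * b ^ (T / 2) := by
        gcongr
        linarith
    _ = 40 * T * b ^ (T / 2) / 10 ^ (t + 2) := by rw [pow_succ _ (t + 1)]; field_simp; ring
    _ ≤ (10 * b) ^ T / 10 ^ (t + 2) := by gcongr; exact forty_mul_mul_rpow_half_le hb hT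

theorem stmt_0 (b : ℝ) (hb : 4 ≤ b) (x : ℕ → ℝ)
    (hx0 : x 0 = 1)
    (hx : ∀ t : ℕ, 1 ≤ t → x t = 4 * x (t - 1) * b ^ ((5 : ℝ) ^ t * x (t - 1))) :
    ∀ t : ℕ, x t ≤ tower (10 * b) (t + 1) / 10 ^ (t + 1) := by
  intro t
  induction t with
  | zero =>
    simp only [tower, rpow_one, hx0]
    linarith
  | succ t ih =>
    rw [hx (t + 1) (by omega), Nat.add_sub_cancel]
    have hT : 4 ≤ tower (10 * b) (t + 1) := by linarith [le_tower_succ (by linarith : 1 ≤ 10 * b) t]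
    exact four_mul_mul_rpow_le_div_ten_pow hb hT t ih
end

section
/- Let b ≥ 4 and n ≥ 1 be real numbers, and define the sequence (x_t)_{t≥0} by x_0 = 1 and x_t = 4·x_{t−1}·b^{5^t·x_{t−1}} for t ≥ 1. Suppose (s_t)_{t≥0} is a sequence of positive reals with s_0 = n and, for every t ≥ 1, s_t ≥ s_{t−1} / (2·b^{5^t·n / s_{t−1}}). Then s_t ≥ n / x_t for every t ≥ 0. -/
theorem stmt_2 (b n : ℝ) (hb : 4 ≤ b) (hn : 1 ≤ n) (x s : ℕ → ℝ)
    (hx0 : x 0 = 1)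
    (hx : ∀ t : ℕ, 1 ≤ t → x t = 4 * x (t - 1) * b ^ ((5 : ℝ) ^ t * x (t - 1)))
    (hspos : ∀ t, 0 < s t) (hs0 : s 0 = n)
    (hs : ∀ t : ℕ, 1 ≤ t →
      s t ≥ s (t - 1) / (2 * b ^ ((5 : ℝ) ^ t * n / s (t - 1)))) :
    ∀ t : ℕ, s t ≥ n / x t := by
  have hb1 : (1 : ℝ) ≤ b := by linarith
  have hxge : ∀ t, (1 : ℝ) ≤ x t := by
    intro t
    induction t with
    | zero => simp [hx0]
    | succ k ih =>
      have hxk := hx (k + 1) (by omega)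
      simp only [Nat.add_sub_cancel] at hxk
      have hexp : (0 : ℝ) ≤ (5 : ℝ) ^ (k + 1) * x k := by positivity
      have hpow : (1 : ℝ) ≤ b ^ ((5 : ℝ) ^ (k + 1) * x k) :=
        Real.one_le_rpow hb1 hexp
      rw [hxk]
      nlinarith
  intro t
  induction t with
  | zero => simp [hs0, hx0]
  | succ k ih =>
    have hxk : (1 : ℝ) ≤ x k := hxge k
    have hxkpos : (0 : ℝ) < x k := by linarith
    have hsk := hspos k
    have hnpos : (0 : ℝ) < n := by linarith
    have hxk1 := hx (k + 1) (by omega)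
    simp only [Nat.add_sub_cancel] at hxk1
    have hsk1 := hs (k + 1) (by omega)
    simp only [Nat.add_sub_cancel] at hsk1
    set e : ℝ := (5 : ℝ) ^ (k + 1) with he
    have hepos : (0 : ℝ) < e := by positivity
    -- n / s k ≤ x k
    have hdiv : e * n / s k ≤ e * x k := by
      rw [div_le_iff₀ hsk]
      have : n ≤ x k * s k := by
        have := ih
        rw [ge_iff_le, div_le_iff₀ hxkpos] at this
        linarith
      nlinarith
    have hBC : b ^ (e * n / s k) ≤ b ^ (e * x k) :=
      Real.rpow_le_rpow_of_exponent_le hb1 hdiv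
    have hBpos : (0 : ℝ) < b ^ (e * n / s k) := Real.rpow_pos_of_pos (by linarith) _
    have hCpos : (0 : ℝ) < b ^ (e * x k) := Real.rpow_pos_of_pos (by linarith) _
    have h1 : n / x k / (2 * b ^ (e * n / s k)) ≤ s k / (2 * b ^ (e * n / s k)) := by
      apply div_le_div_of_nonneg_right _ (by positivity)
      rw [div_le_iff₀ hxkpos]
      have := ih
      rw [ge_iff_le, div_le_iff₀ hxkpos] at this
      linarith
    have h2 : n / x (k + 1) ≤ n / x k / (2 * b ^ (e * n / s k)) := by
      rw [hxk1, div_div]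
      apply div_le_div_of_nonneg_left (le_of_lt hnpos) (by positivity)
      have : x k * (2 * b ^ (e * n / s k)) ≤ x k * (4 * b ^ (e * x k)) := by
        apply mul_le_mul_of_nonneg_left _ (le_of_lt hxkpos)
        nlinarith
      calc x k * (2 * b ^ (e * n / s k)) ≤ x k * (4 * b ^ (e * x k)) := this
        _ = 4 * x k * b ^ (e * x k) := by ring
    calc n / x (k + 1) ≤ n / x k / (2 * b ^ (e * n / s k)) := h2
      _ ≤ s k / (2 * b ^ (e * n / s k)) := h1
      _ ≤ s (k + 1) := hsk1
end

section
/- For all sufficiently large n the following holds. Let f : {1,…,n} → ℝ take at most ℓ ≤ √n distinct values, let v ∈ ℝ, and let k = |{i : f(i) ≥ v}| with k ≤ n/2. Then {1,…,n} can be partitioned into: the set S₀ = {i : f(i) ≥ v} of size k; buckets S₁,…,S_r such that f is constant on each S_j with value strictly less than v, each bucket size |S_j| lies in the interval [√n/10, 2√n/10], the total bucket size Σ_{j=1}^{r} |S_j| lies in [4n/10 − 2√n/10, 4n/10], and the number of buckets satisfies 2√n − 1 ≤ r ≤ 4√n; and a residual set R with |R| ≥ n/10. -/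
/-!
Take buckets of size `b = ⌈√n / 10⌉`. Greedily cutting monochromatic `b`-sets out of the
elements below the threshold leaves fewer than `b` elements of each of the at most `√n` values,
so at most `(b - 1)√n ≤ n / 10` elements are wasted, while at least `n / 2` are available.
Hence `r = ⌊(4n / 10) / b⌋` buckets fit; they cover between `4n / 10 - b` and `4n / 10`
elements, and the rest, at least `n - n / 2 - 4n / 10`, forms the residual set.
-/

open Finset Function

lemma Pairwise.disjoint_fin_cons {α : Type*} [DecidableEq α] {r : ℕ} {T : Finset α}
    {S : Fin r → Finset α} (hT : ∀ j, Disjoint T (S j)) (hS : Pairwise (Disjoint on S)) :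
    Pairwise (Disjoint on (Fin.cons T S : Fin (r + 1) → Finset α)) := by
  intro i j hij
  induction i using Fin.cases <;> induction j using Fin.cases
  · exact absurd rfl hij
  · exact hT _
  · exact (hT _).symm
  · exact hS (ne_of_apply_ne Fin.succ hij)

/-- Each value of `g` can strand fewer than `b` elements of `B`, which is what the term
`(b - 1) * #(B.image g)` pays for. -/
theorem exists_pairwise_disjoint_monochromatic {α β : Type*} [DecidableEq α] [DecidableEq β]
    (g : α → β) {b : ℕ} (hb : 0 < b) :
    ∀ (r : ℕ) (B : Finset α), r * b + (b - 1) * #(B.image g) ≤ #B →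
      ∃ S : Fin r → Finset α, Pairwise (Disjoint on S) ∧
        ∀ j, S j ⊆ B ∧ #(S j) = b ∧ ∃ c, ∀ i ∈ S j, g i = c := by
  intro r
  induction r with
  | zero => exact fun _ _ => ⟨Fin.elim0, fun i => i.elim0, fun i => i.elim0⟩
  | succ r ih =>
    intro B hB
    obtain ⟨c, -, hc⟩ : ∃ c ∈ B.image g, b ≤ #{i ∈ B | g i = c} := by
      by_contra! hsmall
      have : #B ≤ (b - 1) * #(B.image g) := by
        rw [card_eq_sum_card_image g B, mul_comm]
        exact sum_le_card_nsmul _ _ _ fun c hc => Nat.le_sub_one_of_lt (hsmall c hc)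
      nlinarith
    obtain ⟨T, hTc, hT⟩ := exists_subset_card_eq hc
    have hTB : T ⊆ B := hTc.trans (filter_subset _ _)
    have hrest : r * b + (b - 1) * #((B \ T).image g) ≤ #(B \ T) := by
      have := Nat.mul_le_mul_left (b - 1)
        (card_le_card (image_subset_image (f := g) (sdiff_subset (s := B) (t := T))))
      rw [card_sdiff_of_subset hTB, hT]
      have : (r + 1) * b = r * b + b := by ring
      omega
    obtain ⟨S, hS, hSB⟩ := ih (B \ T) hrest
    refine ⟨Fin.cons T S, hS.disjoint_fin_cons fun j => ?_, fun j => ?_⟩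
    · exact disjoint_of_subset_right (hSB j).1 disjoint_sdiff
    · induction j using Fin.cases with
      | zero => exact ⟨hTB, hT, c, fun i hi => (mem_filter.1 (hTc hi)).2⟩
      | succ j =>
        obtain ⟨hSj, hcard, hmono⟩ := hSB j
        exact ⟨hSj.trans sdiff_subset, hcard, hmono⟩

lemma partition_compl_union_biUnion {α : Type*} [Fintype α] [DecidableEq α] {r : ℕ}
    (K : Finset α) (S : Fin r → Finset α) (hSK : ∀ j, S j ⊆ Kᶜ)
    (hS : Pairwise (Disjoint on S)) :
    (∀ j, Disjoint K (S j)) ∧ Disjoint K (K ∪ univ.biUnion S)ᶜ ∧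
      (∀ j, Disjoint (S j) (K ∪ univ.biUnion S)ᶜ) ∧
      K ∪ (K ∪ univ.biUnion S)ᶜ ∪ univ.biUnion S = univ ∧
      #(K ∪ univ.biUnion S)ᶜ + #K + ∑ j, #(S j) = Fintype.card α := by
  have hKS : ∀ j, Disjoint K (S j) := fun j =>
    disjoint_of_subset_right (hSK j) disjoint_compl_right
  refine ⟨hKS, disjoint_compl_right.mono_right (compl_le_compl subset_union_left),
    fun j => disjoint_compl_right.mono_left ?_, ?_, ?_⟩
  · exact (subset_biUnion_of_mem S (mem_univ j)).trans subset_union_right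
  · ext i
    simp only [mem_union, mem_compl, mem_univ, iff_true]
    tauto
  · rw [add_assoc, ← card_biUnion fun j _ j' _ h => hS h,
      ← card_union_of_disjoint ((disjoint_biUnion_right _ _ _).2 fun j _ => hKS j),
      card_compl_add_card]

section FloorDiv

variable {K : Type*} [Field K] [LinearOrder K] [IsStrictOrderedRing K] [FloorSemiring K]
  {x b : K}

lemma Nat.floor_div_mul_le (hx : 0 ≤ x) (hb : 0 < b) : ⌊x / b⌋₊ * b ≤ x :=
  (le_div_iff₀ hb).1 (Nat.floor_le (div_nonneg hx hb.le))

lemma Nat.sub_lt_floor_div_mul (hb : 0 < b) : x - b < ⌊x / b⌋₊ * b := by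
  have := (div_lt_iff₀ hb).1 (Nat.lt_floor_add_one (x / b))
  linarith

end FloorDiv

lemma bucket_count_bounds {s b r : ℝ} (hs : 0 < s) (hr : 0 ≤ r) (hb_lo : s / 10 ≤ b)
    (hb_hi : b ≤ 2 * s / 10) (hrb_lo : 4 * (s * s) / 10 - 2 * s / 10 ≤ r * b)
    (hrb_hi : r * b ≤ 4 * (s * s) / 10) :
    2 * s - 1 ≤ r ∧ r ≤ 4 * s := by
  constructor
  · nlinarith [mul_le_mul_of_nonneg_left hb_hi hr]
  · nlinarith [mul_le_mul_of_nonneg_left hb_lo hr]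

theorem stmt_3 :
    ∃ N : ℕ, ∀ n : ℕ, N ≤ n → ∀ f : Fin n → ℝ, ∀ v : ℝ,
    ((Finset.univ.image f).card : ℝ) ≤ Real.sqrt n →
    ((Finset.univ.filter (fun i => v ≤ f i)).card : ℝ) ≤ (n : ℝ) / 2 →
    ∃ (r : ℕ) (S : Fin r → Finset (Fin n)) (R : Finset (Fin n)),
      (∀ j, Disjoint (Finset.univ.filter (fun i => v ≤ f i)) (S j)) ∧
      Disjoint (Finset.univ.filter (fun i => v ≤ f i)) R ∧
      (∀ j, Disjoint (S j) R) ∧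
      (∀ j j', j ≠ j' → Disjoint (S j) (S j')) ∧
      (Finset.univ.filter (fun i => v ≤ f i)) ∪ R ∪ Finset.univ.biUnion S = Finset.univ ∧
      (∀ j, ∃ c : ℝ, c < v ∧ ∀ i ∈ S j, f i = c) ∧
      (∀ j, Real.sqrt n / 10 ≤ ((S j).card : ℝ) ∧ ((S j).card : ℝ) ≤ 2 * Real.sqrt n / 10) ∧
      4 * (n : ℝ) / 10 - 2 * Real.sqrt n / 10 ≤ (∑ j, ((S j).card : ℝ)) ∧
      (∑ j, ((S j).card : ℝ)) ≤ 4 * (n : ℝ) / 10 ∧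
      2 * Real.sqrt n - 1 ≤ (r : ℝ) ∧ (r : ℝ) ≤ 4 * Real.sqrt n ∧
      (n : ℝ) / 10 ≤ (R.card : ℝ) := by
  refine ⟨100, fun n hn f v hval hk => ?_⟩
  set s := √(n : ℝ)
  have hs : 10 ≤ s := Real.le_sqrt_of_sq_le (by norm_num; exact_mod_cast hn)
  have hsq : s * s = n := Real.mul_self_sqrt n.cast_nonneg
  set b := ⌈s / 10⌉₊
  have hb : 0 < b := Nat.ceil_pos.2 (by positivity)
  have hb_lo : s / 10 ≤ b := Nat.le_ceil _
  have hb_lt : (b : ℝ) < s / 10 + 1 := Nat.ceil_lt_add_one (by positivity)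
  set r := ⌊4 * (n : ℝ) / 10 / b⌋₊
  have hrb_hi : r * (b : ℝ) ≤ 4 * n / 10 := Nat.floor_div_mul_le (by positivity) (by positivity)
  have hrb_lo : 4 * (n : ℝ) / 10 - b < r * b := Nat.sub_lt_floor_div_mul (by positivity)
  set K := univ.filter (fun i => v ≤ f i)
  have hfits : r * b + (b - 1) * #(Kᶜ.image f) ≤ #Kᶜ := by
    have hcolours : (#(Kᶜ.image f) : ℝ) ≤ s :=
      le_trans (by exact_mod_cast card_le_card (image_subset_image (subset_univ _))) hval
    have hwaste : ((b : ℝ) - 1) * #(Kᶜ.image f) ≤ s / 10 * s :=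
      mul_le_mul (by linarith) hcolours (by positivity) (by positivity)
    have hKc : (#Kᶜ : ℝ) + #K = n := by
      exact_mod_cast (card_compl_add_card K).trans (Fintype.card_fin n)
    rw [← Nat.cast_le (α := ℝ)]
    push_cast [Nat.cast_pred hb]
    nlinarith
  obtain ⟨S, hS, hSK⟩ := exists_pairwise_disjoint_monochromatic f hb r Kᶜ hfits
  obtain ⟨hKS, hKR, hSR, hcover, hcard⟩ :=
    partition_compl_union_biUnion K S (fun j => (hSK j).1) hS
  have hsum : ∑ j, (#(S j) : ℝ) = r * b := by simp [(hSK _).2.1]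
  obtain ⟨hr_lo, hr_hi⟩ := bucket_count_bounds (b := b) (r := r) (by positivity)
    (by positivity) hb_lo (by linarith) (by linarith) (by linarith)
  refine ⟨r, S, _, hKS, hKR, hSR, fun j j' h => hS h, hcover, fun j => ?_,
    fun j => by rw [(hSK j).2.1]; exact ⟨hb_lo, by linarith⟩,
    by rw [hsum]; linarith, by rw [hsum]; linarith, hr_lo, hr_hi, ?_⟩
  · obtain ⟨hSj, hbj, c, hc⟩ := hSK j
    obtain ⟨i, hi⟩ := card_pos.1 (hbj ▸ hb)
    exact ⟨c, by simpa [K, hc i hi] using hSj hi, hc⟩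
  · have : (#(K ∪ univ.biUnion S)ᶜ : ℝ) + #K + r * b = n := by
      rw [← hsum]; exact_mod_cast hcard.trans (Fintype.card_fin n)
    linarith
end

section
/- Fix a constant ε ∈ (0,1). For all sufficiently large n (depending on ε) the following holds. Let f : {1,…,n} → ℝ take at most ℓ ≤ n^{1−ε} distinct values, let v ∈ ℝ, and suppose the set S₀ = {i : f(i) ≥ v} has |S₀| ≤ n^{ε/3}. Then {1,…,n} can be partitioned into: the set S₀; buckets S₁,…,S_{ℓ₃} such that f is constant on each S_j with value strictly less than v and each bucket size |S_j| lies in [n^{ε/2}/10, 2·n^{ε/2}/10], with total bucket size Σ_{j=1}^{ℓ₃} |S_j| in the interval [n/9, n/8]; and a residual set R with |R| ≥ n/4. -/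
/-!
Below `v` the function takes at most `n^{1-ε}` values, so by pigeonhole some fibre has at least
`b = ⌈n^{ε/2}/10⌉` elements as long as at least `n^{1-ε} · b = O(n^{1-ε/2})` elements remain.
Cutting buckets of size `b` out of such fibres one at a time therefore yields `⌈n/(9b)⌉` of them;
the remaining elements below `v` form the residual set.
-/

open Finset Function

section Extraction

variable {α β : Type*} [DecidableEq β]

theorem Finset.exists_monochromatic_subset_card_eq (f : α → β) {L : Finset α} {b : ℕ}
    (hL : L.Nonempty) (h : #(L.image f) * b ≤ #L) :
    ∃ c, ∃ T ⊆ L, #T = b ∧ ∀ i ∈ T, f i = c := by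
  obtain ⟨c, -, hc⟩ := exists_le_card_fiber_of_mul_le_card_of_maps_to
    (fun a ha => mem_image_of_mem f ha) (hL.image f) h
  obtain ⟨T, hT, hTcard⟩ := exists_subset_card_eq hc
  exact ⟨c, T, hT.trans (filter_subset _ _), hTcard, fun i hi => (mem_filter.1 (hT hi)).2⟩

theorem Finset.exists_pairwiseDisjoint_monochromatic_subsets [DecidableEq α] (f : α → β) {b : ℕ}
    (hb : 0 < b) :
    ∀ (m : ℕ) (L : Finset α), m * b + #(L.image f) * b ≤ #L →
    ∃ S : Fin m → Finset α, (∀ j, S j ⊆ L ∧ #(S j) = b ∧ ∃ c, ∀ i ∈ S j, f i = c) ∧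
      Pairwise (Disjoint on S)
  | 0, _, _ => ⟨Fin.elim0, fun j => j.elim0, fun j => j.elim0⟩
  | m + 1, L, h => by
    have hL : L.Nonempty := card_pos.1 (by nlinarith)
    obtain ⟨c, T, hTL, hTcard, hTc⟩ :=
      exists_monochromatic_subset_card_eq f hL (b := b) (by nlinarith)
    have hrest : m * b + #((L \ T).image f) * b ≤ #(L \ T) := by
      have : #((L \ T).image f) ≤ #(L.image f) := card_le_card (image_subset_image sdiff_subset)
      rw [card_sdiff_of_subset hTL, hTcard]
      exact Nat.le_sub_of_add_le (by nlinarith [Nat.mul_le_mul_right b this])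
    obtain ⟨S, hS, hSdisj⟩ := exists_pairwiseDisjoint_monochromatic_subsets f hb m (L \ T) hrest
    have hTS : ∀ k, Disjoint T (S k) := fun k => disjoint_sdiff.mono_right (hS k).1
    refine ⟨Fin.cons T S, Fin.forall_fin_succ.2 ⟨⟨hTL, hTcard, c, hTc⟩, fun k => ?_⟩, ?_⟩
    · obtain ⟨hSL, hScard, hSc⟩ := hS k
      exact ⟨by simpa using hSL.trans sdiff_subset, by simpa using hScard, by simpa using hSc⟩
    · intro j j' hne
      induction j using Fin.cases <;> induction j' using Fin.cases <;>
        simp only [onFun, Fin.cons_zero, Fin.cons_succ]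
      · exact absurd rfl hne
      · exact hTS _
      · exact (hTS _).symm
      · exact hSdisj (fun h => hne (congrArg Fin.succ h))

end Extraction

theorem exists_bucket_size_and_count {A x : ℝ} (hA : 10 ≤ A) (hx : 0 ≤ x) :
    ∃ b m : ℕ, 0 < b ∧ A / 10 ≤ b ∧ (b : ℝ) ≤ 2 * A / 10 ∧
      x / 9 ≤ m * b ∧ (m * b : ℝ) ≤ x / 9 + b := by
  have hb0 : 0 < ⌈A / 10⌉₊ := Nat.ceil_pos.2 (by linarith)
  have hbR : (0 : ℝ) < ⌈A / 10⌉₊ := by exact_mod_cast hb0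
  refine ⟨⌈A / 10⌉₊, ⌈x / (9 * ⌈A / 10⌉₊)⌉₊, hb0, Nat.le_ceil _, ?_, ?_, ?_⟩
  · linarith [Nat.ceil_lt_add_one (show 0 ≤ A / 10 by linarith)]
  · calc x / 9 = x / (9 * ⌈A / 10⌉₊) * ⌈A / 10⌉₊ := by field_simp
      _ ≤ _ := by gcongr; exact Nat.le_ceil _
  · calc (⌈x / (9 * ⌈A / 10⌉₊)⌉₊ * ⌈A / 10⌉₊ : ℝ)
        ≤ (x / (9 * ⌈A / 10⌉₊) + 1) * ⌈A / 10⌉₊ := by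
          gcongr; exact (Nat.ceil_lt_add_one (by positivity)).le
      _ = x / 9 + ⌈A / 10⌉₊ := by field_simp

theorem exists_bucket_partition {α : Type*} [Fintype α] [DecidableEq α] {n : ℕ}
    (hn : Fintype.card α = n) (f : α → ℝ) (v A : ℝ) (hA : 100 ≤ A) (hAn : A * A ≤ n)
    (himg : (#(univ.image f) : ℝ) ≤ n / A)
    (hS0 : (#(univ.filter (fun i => v ≤ f i)) : ℝ) ≤ A) :
    ∃ (ℓ₃ : ℕ) (S : Fin ℓ₃ → Finset α) (R : Finset α),
      (∀ j, Disjoint (univ.filter (fun i => v ≤ f i)) (S j)) ∧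
      Disjoint (univ.filter (fun i => v ≤ f i)) R ∧
      (∀ j, Disjoint (S j) R) ∧
      (∀ j j', j ≠ j' → Disjoint (S j) (S j')) ∧
      (univ.filter (fun i => v ≤ f i)) ∪ R ∪ univ.biUnion S = univ ∧
      (∀ j, ∃ c : ℝ, c < v ∧ ∀ i ∈ S j, f i = c) ∧
      (∀ j, A / 10 ≤ (#(S j) : ℝ) ∧ (#(S j) : ℝ) ≤ 2 * A / 10) ∧
      (n : ℝ) / 9 ≤ (∑ j, (#(S j) : ℝ)) ∧
      (∑ j, (#(S j) : ℝ)) ≤ (n : ℝ) / 8 ∧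
      (n : ℝ) / 4 ≤ (#R : ℝ) := by
  have hA0 : 0 < A := by linarith
  have hAn' : A ≤ n / 100 := by nlinarith
  obtain ⟨b, m, hb0, hbA, hbA', hmb, hmb'⟩ :=
    exists_bucket_size_and_count (A := A) (x := n) (by linarith) n.cast_nonneg
  set S0 := univ.filter (fun i => v ≤ f i)
  set L := univ.filter (fun i => ¬ v ≤ f i)
  have hsplit : (#S0 : ℝ) + #L = n := by
    rw [← hn]; exact_mod_cast card_filter_add_card_filter_not _
  have hfit : m * b + #(L.image f) * b ≤ #L := by
    have hk : (#(L.image f) : ℝ) ≤ n / A :=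
      le_trans (by exact_mod_cast card_le_card (image_subset_image (filter_subset _ _))) himg
    have hkb : (#(L.image f) * b : ℝ) ≤ n / 5 :=
      calc (#(L.image f) * b : ℝ) ≤ n / A * (2 * A / 10) := by gcongr
        _ = n / 5 := by field_simp; ring
    exact_mod_cast (show (m * b + #(L.image f) * b : ℝ) ≤ #L by linarith)
  obtain ⟨S, hS, hSdisj⟩ := exists_pairwiseDisjoint_monochromatic_subsets f hb0 m L hfit
  set U := univ.biUnion S
  have hUL : U ⊆ L := biUnion_subset.2 fun j _ => (hS j).1
  have hU : #U = m * b := by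
    rw [card_biUnion fun j _ j' _ h => hSdisj h]; simp [(hS _).2.1]
  have hR : (#(L \ U) : ℝ) = #L - m * b := by
    rw [card_sdiff_of_subset hUL, Nat.cast_sub (hU ▸ card_le_card hUL), hU, Nat.cast_mul]
  have hsum : ∑ j, (#(S j) : ℝ) = m * b := by simp [(hS _).2.1]
  have hS0L : Disjoint S0 L := disjoint_filter_filter_not _ _ _
  refine ⟨m, S, L \ U, fun j => hS0L.mono_right (hS j).1, hS0L.mono_right sdiff_subset,
    fun j => disjoint_sdiff.mono_left (subset_biUnion_of_mem S (mem_univ j)),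
    fun j j' h => hSdisj h, ?_, fun j => ?_, fun j => ?_, ?_, ?_, ?_⟩
  · rw [union_assoc, sdiff_union_of_subset hUL, filter_union_filter_not_eq]
  · obtain ⟨c, hc⟩ := (hS j).2.2
    obtain ⟨i, hi⟩ := card_pos.1 ((hS j).2.1 ▸ hb0)
    have hiL : ¬ v ≤ f i := (mem_filter.1 ((hS j).1 hi)).2
    exact ⟨c, hc i hi ▸ not_le.1 hiL, hc⟩
  · rw [(hS j).2.1]; exact ⟨hbA, hbA'⟩
  · rw [hsum]; exact hmb
  · rw [hsum]; linarith
  · rw [hR]; linarith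

theorem stmt_4 (ε : ℝ) (hε0 : 0 < ε) (hε1 : ε < 1) :
    ∃ N : ℕ, ∀ n : ℕ, N ≤ n → ∀ f : Fin n → ℝ, ∀ v : ℝ,
    ((Finset.univ.image f).card : ℝ) ≤ (n : ℝ) ^ ((1 : ℝ) - ε) →
    ((Finset.univ.filter (fun i => v ≤ f i)).card : ℝ) ≤ (n : ℝ) ^ (ε / 3) →
    ∃ (ℓ₃ : ℕ) (S : Fin ℓ₃ → Finset (Fin n)) (R : Finset (Fin n)),
      (∀ j, Disjoint (Finset.univ.filter (fun i => v ≤ f i)) (S j)) ∧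
      Disjoint (Finset.univ.filter (fun i => v ≤ f i)) R ∧
      (∀ j, Disjoint (S j) R) ∧
      (∀ j j', j ≠ j' → Disjoint (S j) (S j')) ∧
      (Finset.univ.filter (fun i => v ≤ f i)) ∪ R ∪ Finset.univ.biUnion S = Finset.univ ∧
      (∀ j, ∃ c : ℝ, c < v ∧ ∀ i ∈ S j, f i = c) ∧
      (∀ j, (n : ℝ) ^ (ε / 2) / 10 ≤ ((S j).card : ℝ) ∧
        ((S j).card : ℝ) ≤ 2 * (n : ℝ) ^ (ε / 2) / 10) ∧
      (n : ℝ) / 9 ≤ (∑ j, ((S j).card : ℝ)) ∧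
      (∑ j, ((S j).card : ℝ)) ≤ (n : ℝ) / 8 ∧
      (n : ℝ) / 4 ≤ (R.card : ℝ) := by
  refine ⟨⌈(100 : ℝ) ^ (2 / ε)⌉₊, fun n hN f v himg hS0 => ?_⟩
  have hN' : (100 : ℝ) ^ (2 / ε) ≤ n := Nat.ceil_le.1 hN
  have hn1 : (1 : ℝ) ≤ n := (Real.one_le_rpow (by norm_num) (by positivity)).trans hN'
  have hn0 : (0 : ℝ) < n := by linarith
  have hA : 100 ≤ (n : ℝ) ^ (ε / 2) :=
    calc (100 : ℝ) = ((100 : ℝ) ^ (2 / ε)) ^ (ε / 2) := by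
          rw [← Real.rpow_mul (by norm_num), div_mul_div_comm, mul_comm, div_self (by positivity),
            Real.rpow_one]
      _ ≤ _ := by gcongr
  have hAn : (n : ℝ) ^ (ε / 2) * (n : ℝ) ^ (ε / 2) ≤ n := by
    rw [← Real.rpow_add hn0, add_halves]
    exact Real.rpow_le_self_of_one_le hn1 hε1.le
  have himg' : (n : ℝ) ^ ((1 : ℝ) - ε) ≤ n / (n : ℝ) ^ (ε / 2) := by
    calc (n : ℝ) ^ ((1 : ℝ) - ε) ≤ (n : ℝ) ^ ((1 : ℝ) - ε / 2) :=
          Real.rpow_le_rpow_of_exponent_le hn1 (by linarith)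
      _ = n / (n : ℝ) ^ (ε / 2) := by rw [Real.rpow_sub hn0, Real.rpow_one]
  have hS0' : (n : ℝ) ^ (ε / 3) ≤ (n : ℝ) ^ (ε / 2) :=
    Real.rpow_le_rpow_of_exponent_le hn1 (by linarith)
  exact exists_bucket_partition (Fintype.card_fin n) f v _ hA hAn (himg.trans himg')
    (hS0.trans hS0')
end
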